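/- Let Ω ⊂ ℝ^n be a bounded domain, p ≥ 1, and ν a probability measure on Ω. If μ = u·ℒ^n minimizes 𝔉^p_ν over probability measures on Ω and 𝔉^p_ν(μ) < +∞, then f'(u) ∈ L¹(Ω) and u·f'(u) ∈ L¹(Ω). -/

import Mathlib

open MeasureTheory Set Filter Topology Metric
open scoped ENNReal NNReal

noncomputable section

/-- Euclidean space ℝⁿ. -/
abbrev Rn (n : ℕ) := EuclideanSpace ℝ (Fin n)

/-- `μ` is a probability measure "on `Ω`", i.e. giving no mass to the complement of `Ω`. -/
def ProbOn {n : ℕ} (Ω : Set (Rn n)) (μ : Measure (Rn n)) : Prop :=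
  IsProbabilityMeasure μ ∧ μ Ωᶜ = 0

/-- Transport plans (couplings) between two measures:  probability measures on the
product space whose marginals are `μ` and `ν`. -/
def Couplings {n : ℕ} (μ ν : Measure (Rn n)) : Set (Measure (Rn n × Rn n)) :=
  {γ | IsProbabilityMeasure γ ∧ γ.map Prod.fst = μ ∧ γ.map Prod.snd = ν}

/-- The Monge–Kantorovich transport cost `T_p(μ,ν) = inf_γ ∫ |x−y|^p dγ`. -/
def Tcost {n : ℕ} (p : ℝ) (μ ν : Measure (Rn n)) : ℝ≥0∞ :=
  ⨅ γ ∈ Couplings μ ν, ∫⁻ z, ENNReal.ofReal (‖z.1 - z.2‖ ^ p) ∂γ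

/-- The measure `u·ℒⁿ` on `Ω` (absolutely continuous with density `u`). -/
def densOn {n : ℕ} (Ω : Set (Rn n)) (u : Rn n → ℝ) : Measure (Rn n) :=
  (volume.restrict Ω).withDensity fun x => ENNReal.ofReal (u x)

/-- `F(μ) = ∫_Ω f(u)` if `μ = u·ℒⁿ` is absolutely continuous, `+∞` otherwise. -/
def Ffun {n : ℕ} (f : ℝ → ℝ) (Ω : Set (Rn n)) (μ : Measure (Rn n)) : ℝ≥0∞ :=
  open scoped Classical in
  if μ ≪ (volume : Measure (Rn n)) then
    ∫⁻ x in Ω, ENNReal.ofReal (f ((μ.rnDeriv volume x).toReal)) else ⊤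

/-- `G(ν) = ∑ᵢ g(aᵢ)` if `ν = ∑ᵢ aᵢ δ_{xᵢ}` is purely atomic (atoms at distinct points),
`+∞` (the infimum over the empty set) otherwise. -/
def Gfun {n : ℕ} (g : ℝ → ℝ) (ν : Measure (Rn n)) : ℝ≥0∞ :=
  ⨅ r : {q : (ℕ → ℝ) × (ℕ → Rn n) //
      (∀ i, 0 ≤ q.1 i) ∧
      (∀ i j, q.1 i ≠ 0 → q.1 j ≠ 0 → q.2 i = q.2 j → i = j) ∧
      ν = Measure.sum fun i => ENNReal.ofReal (q.1 i) • Measure.dirac (q.2 i)},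
    ∑' i, ENNReal.ofReal (g (r.1.1 i))

/-- The total cost functional `𝔉^p(μ,ν) = T_p(μ,ν) + F(μ) + G(ν)`. -/
def FFp {n : ℕ} (p : ℝ) (f g : ℝ → ℝ) (Ω : Set (Rn n)) (μ ν : Measure (Rn n)) : ℝ≥0∞ :=
  Tcost p μ ν + Ffun f Ω μ + Gfun g ν

/-- The functional `𝔉^p_ν(μ) = T_p(μ,ν) + F(μ)` with `ν` fixed. -/
def FFnu {n : ℕ} (p : ℝ) (f : ℝ → ℝ) (Ω : Set (Rn n)) (ν μ : Measure (Rn n)) : ℝ≥0∞ :=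
  Tcost p μ ν + Ffun f Ω μ

/-- A bounded domain: the closure of a nonempty connected bounded open set,
with Lebesgue-negligible boundary. -/
def IsBoundedDomain {n : ℕ} (Ω : Set (Rn n)) : Prop :=
  ∃ U : Set (Rn n), IsOpen U ∧ U.Nonempty ∧ IsConnected U ∧ Bornology.IsBounded U ∧
    Ω = closure U ∧ volume (frontier Ω) = 0

/-- The `c`-transform `χ^c(y) = inf_{x∈Ω} (|x−y|^p − χ(x))` for the cost `c(x,y)=|x−y|^p`. -/
def ctransform {n : ℕ} (Ω : Set (Rn n)) (p : ℝ) (χ : Rn n → ℝ) (y : Rn n) : ℝ :=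
  ⨅ x : Ω, (‖(x : Rn n) - y‖ ^ p - χ x)

/-- `ψ` is `c`-concave on `Ω` (for the cost `|x−y|^p`) if it is a `c`-transform. -/
def CConcave {n : ℕ} (Ω : Set (Rn n)) (p : ℝ) (ψ : Rn n → ℝ) : Prop :=
  ∃ χ : Rn n → ℝ, ∀ y ∈ Ω, ψ y = ctransform Ω p χ y

/-- `ψ` is a Kantorovich potential for the transport from `μ` to `ν` with cost `|x−y|^p`. -/
def IsKantorovichPotential {n : ℕ} (Ω : Set (Rn n)) (p : ℝ)
    (μ ν : Measure (Rn n)) (ψ : Rn n → ℝ) : Prop :=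
  (∀ x ∈ Ω, ∀ y ∈ Ω, ψ x + ctransform Ω p ψ y ≤ ‖x - y‖ ^ p) ∧
  (∫ x in Ω, ψ x ∂μ) + (∫ y in Ω, ctransform Ω p ψ y ∂ν) = (Tcost p μ ν).toReal

/-- `μ` has finite `p`-th moment (i.e. `μ ∈ 𝒲_p`). -/
def FiniteMoment {n : ℕ} (p : ℝ) (μ : Measure (Rn n)) : Prop :=
  ∫⁻ x, ENNReal.ofReal (‖x‖ ^ p) ∂μ < ⊤

/-- Weak-* convergence of a sequence of measures. -/
def WeakStar {n : ℕ} (μs : ℕ → Measure (Rn n)) (μ : Measure (Rn n)) : Prop :=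
  ∀ φ : Rn n → ℝ, Continuous φ →
    Tendsto (fun h => ∫ x, φ x ∂(μs h)) atTop (𝓝 (∫ x, φ x ∂μ))

end

/-!
Perturb the minimizer towards the uniform density `c = 1 / |Ω|`, i.e. compare `μ` with
`μ_ε = (1 - ε) μ + ε c 𝟙_Ω`, whose density is `u_ε = (1 - ε) u + ε c`. The transport cost is
convex and bounded by `D^p` between probability measures on `Ω`, so minimality gives
`∫ f(u) - f(u_ε) ≤ ε D^p`. The tangent inequality for `f` at `u_ε` turns this into
`∫ f'(u_ε) (u - c) ≤ D^p`, with integrands bounded below by `-c f'(c)`. Letting `ε → 0`,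
Fatou's lemma puts `f'(u) (u - c)` in `L¹(Ω)`; since `f' ≥ 0` is monotone this controls both
`f'(u)` and `u f'(u) = f'(u) (u - c) + c f'(u)`.
-/

lemma ContinuousOn.measurable_comp {α : Type*} [MeasurableSpace α] {g : ℝ → ℝ} {s : Set ℝ}
    (hg : ContinuousOn g s) {w : α → ℝ} (hw : Measurable w) (hws : ∀ x, w x ∈ s) :
    Measurable fun x => g (w x) :=
  hg.domRestrict.measurable.comp (hw.subtype_mk (h := hws))

section ConvexDeriv

variable {S : Set ℝ} {f f' : ℝ → ℝ}

lemma ConvexOn.monotoneOn_of_hasDerivWithinAt (hf : ConvexOn ℝ S f)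
    (hd : ∀ t ∈ S, HasDerivWithinAt f (f' t) S t) : MonotoneOn f' S := by
  intro a ha b hb hab
  rcases hab.eq_or_lt with rfl | hlt
  · exact le_rfl
  exact (hf.le_slope_of_hasDerivWithinAt ha hb hlt (hd a ha)).trans
    (hf.slope_le_of_hasDerivWithinAt ha hb hlt (hd b hb))

lemma ConvexOn.add_mul_sub_le_of_hasDerivWithinAt (hf : ConvexOn ℝ S f) {a b : ℝ}
    (ha : a ∈ S) (hb : b ∈ S) (hd : HasDerivWithinAt f (f' a) S a) :
    f a + f' a * (b - a) ≤ f b := by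
  rcases lt_trichotomy a b with hlt | rfl | hlt
  · have hs := hf.le_slope_of_hasDerivWithinAt ha hb hlt hd
    rw [slope_def_field, le_div_iff₀ (sub_pos.2 hlt)] at hs
    linarith
  · simp
  · have hs := hf.slope_le_of_hasDerivWithinAt hb ha hlt hd
    rw [slope_def_field, div_le_iff₀ (sub_pos.2 hlt)] at hs
    linarith

end ConvexDeriv

section DerivOnIci

lemma sub_mul_add_mul_nonneg {t c ε : ℝ} (ht : 0 ≤ t) (hc : 0 ≤ c) (hε0 : 0 ≤ ε)
    (hε1 : ε ≤ 1) : 0 ≤ (1 - ε) * t + ε * c :=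
  add_nonneg (mul_nonneg (sub_nonneg.2 hε1) ht) (mul_nonneg hε0 hc)

variable {f' : ℝ → ℝ}

lemma nonneg_of_monotoneOn_Ici (hmono : MonotoneOn f' (Ici 0)) (h0 : f' 0 = 0) {t : ℝ}
    (ht : 0 ≤ t) : 0 ≤ f' t :=
  h0 ▸ hmono self_mem_Ici ht ht

lemma neg_mul_le_mul_sub_of_monotoneOn (hmono : MonotoneOn f' (Ici 0)) (h0 : f' 0 = 0)
    {t c ε : ℝ} (ht : 0 ≤ t) (hc : 0 ≤ c) (hε0 : 0 ≤ ε) (hε1 : ε ≤ 1) :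
    -(c * f' c) ≤ f' ((1 - ε) * t + ε * c) * (t - c) := by
  have hs := sub_mul_add_mul_nonneg ht hc hε0 hε1
  rcases le_total c t with hct | htc
  · have := mul_nonneg (nonneg_of_monotoneOn_Ici hmono h0 hs) (sub_nonneg.2 hct)
    have := mul_nonneg hc (nonneg_of_monotoneOn_Ici hmono h0 hc)
    linarith
  · have hsc : f' ((1 - ε) * t + ε * c) ≤ f' c := hmono hs hc (by nlinarith)
    have := nonneg_of_monotoneOn_Ici hmono h0 hs
    nlinarith

end DerivOnIci

section FirstVariation

variable {α : Type*} [MeasurableSpace α] {m : Measure α} [IsFiniteMeasure m]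
  {f f' : ℝ → ℝ} {u : α → ℝ}

lemma lintegral_deriv_mul_sub_le_of_variation (hf : ConvexOn ℝ (Ici 0) f)
    (hf_nonneg : ∀ t, 0 ≤ t → 0 ≤ f t)
    (hd : ∀ t ∈ Ici (0 : ℝ), HasDerivWithinAt f (f' t) (Ici 0) t)
    (hf'c : ContinuousOn f' (Ici 0)) (hf'0 : f' 0 = 0)
    (hu : Measurable u) (hu0 : ∀ x, 0 ≤ u x)
    (hfu : ∫⁻ x, ENNReal.ofReal (f (u x)) ∂m ≠ ⊤) {c : ℝ} (hc : 0 ≤ c) {B : ℝ≥0∞} {ε : ℝ}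
    (hε0 : 0 < ε) (hε1 : ε ≤ 1)
    (hvar : ∫⁻ x, ENNReal.ofReal (f (u x)) ∂m
      ≤ ∫⁻ x, ENNReal.ofReal (f ((1 - ε) * u x + ε * c)) ∂m + ENNReal.ofReal ε * B) :
    ∫⁻ x, ENNReal.ofReal (f' ((1 - ε) * u x + ε * c) * (u x - c) + c * f' c) ∂m
      ≤ B + ENNReal.ofReal (c * f' c) * m univ := by
  set s : α → ℝ := fun x => (1 - ε) * u x + ε * c
  set g : α → ℝ := fun x => f' (s x) * (u x - c) + c * f' c
  have hs0 : ∀ x, 0 ≤ s x := fun x => sub_mul_add_mul_nonneg (hu0 x) hc hε0.le hε1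
  have hmono := hf.monotoneOn_of_hasDerivWithinAt hd
  have hg0 : ∀ x, 0 ≤ g x := fun x => by
    have := neg_mul_le_mul_sub_of_monotoneOn hmono hf'0 (hu0 x) hc hε0.le hε1
    simp only [g, s]; linarith
  have hg : Measurable fun x => ENNReal.ofReal (g x) :=
    (((hf'c.measurable_comp ((hu.const_mul _).add_const _) hs0).mul
      (hu.sub_const _)).add_const _).ennreal_ofReal
  -- tangent line of `f` at `s x`, evaluated at `u x`, since `u x - s x = ε * (u x - c)`
  have htangent : ∀ x, ENNReal.ofReal (f (s x)) + ENNReal.ofReal ε * ENNReal.ofReal (g x)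
      ≤ ENNReal.ofReal (f (u x)) + ENNReal.ofReal ε * ENNReal.ofReal (c * f' c) := by
    intro x
    have ht := hf.add_mul_sub_le_of_hasDerivWithinAt (hs0 x) (hu0 x) (hd _ (hs0 x))
    rw [← ENNReal.ofReal_mul hε0.le, ← ENNReal.ofReal_mul hε0.le,
      ← ENNReal.ofReal_add (hf_nonneg _ (hs0 x)) (mul_nonneg hε0.le (hg0 x)),
      ← ENNReal.ofReal_add (hf_nonneg _ (hu0 x))
        (mul_nonneg hε0.le (mul_nonneg hc (nonneg_of_monotoneOn_Ici hmono hf'0 hc)))]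
    refine ENNReal.ofReal_le_ofReal ?_
    simp only [g, s] at ht ⊢
    nlinarith
  have hint : ∫⁻ x, ENNReal.ofReal (f (s x)) ∂m + ENNReal.ofReal ε * ∫⁻ x, ENNReal.ofReal (g x) ∂m
      ≤ ∫⁻ x, ENNReal.ofReal (f (u x)) ∂m
        + ENNReal.ofReal ε * (ENNReal.ofReal (c * f' c) * m univ) := by
    calc _ = ∫⁻ x, ENNReal.ofReal (f (s x)) + ENNReal.ofReal ε * ENNReal.ofReal (g x) ∂m := by
          rw [lintegral_add_right _ (hg.const_mul _), lintegral_const_mul _ hg]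
      _ ≤ ∫⁻ x, ENNReal.ofReal (f (u x)) + ENNReal.ofReal ε * ENNReal.ofReal (c * f' c) ∂m :=
          lintegral_mono htangent
      _ = _ := by rw [lintegral_add_right _ measurable_const, lintegral_const, mul_assoc]
  have hs_fin : ∫⁻ x, ENNReal.ofReal (f (s x)) ∂m ≠ ⊤ :=
    ne_top_of_le_ne_top (by finiteness) (le_self_add.trans hint)
  have hε : ENNReal.ofReal ε ≠ 0 := (ENNReal.ofReal_pos.2 hε0).ne'
  -- cancel `∫ f (s x)`, then `ε`
  refine (ENNReal.mul_le_mul_iff_right hε ENNReal.ofReal_ne_top).1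
    (ENNReal.le_of_add_le_add_left hs_fin ?_)
  calc _ ≤ _ := hint
    _ ≤ _ := add_le_add_left hvar _
    _ = _ := by rw [mul_add, ← add_assoc]

lemma lintegral_deriv_mul_sub_le (hf : ConvexOn ℝ (Ici 0) f)
    (hf_nonneg : ∀ t, 0 ≤ t → 0 ≤ f t)
    (hd : ∀ t ∈ Ici (0 : ℝ), HasDerivWithinAt f (f' t) (Ici 0) t)
    (hf'c : ContinuousOn f' (Ici 0)) (hf'0 : f' 0 = 0)
    (hu : Measurable u) (hu0 : ∀ x, 0 ≤ u x)
    (hfu : ∫⁻ x, ENNReal.ofReal (f (u x)) ∂m ≠ ⊤) {c : ℝ} (hc : 0 ≤ c) {B : ℝ≥0∞}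
    (hvar : ∀ ε : ℝ, 0 < ε → ε ≤ 1 → ∫⁻ x, ENNReal.ofReal (f (u x)) ∂m
      ≤ ∫⁻ x, ENNReal.ofReal (f ((1 - ε) * u x + ε * c)) ∂m + ENNReal.ofReal ε * B) :
    ∫⁻ x, ENNReal.ofReal (f' (u x) * (u x - c) + c * f' c) ∂m
      ≤ B + ENNReal.ofReal (c * f' c) * m univ := by
  set e : ℕ → ℝ := fun j => 1 / ((j : ℝ) + 1)
  have he0 : ∀ j, 0 < e j := fun j => by positivity
  have he1 : ∀ j, e j ≤ 1 := fun j => by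
    simp only [e]; rw [div_le_one (by positivity)]; simp
  set G : ℕ → α → ℝ≥0∞ := fun j x =>
    ENNReal.ofReal (f' ((1 - e j) * u x + e j * c) * (u x - c) + c * f' c)
  have hG : ∀ j, Measurable (G j) := fun j =>
    (((hf'c.measurable_comp ((hu.const_mul _).add_const _) fun x =>
      sub_mul_add_mul_nonneg (hu0 x) hc (he0 j).le (he1 j)).mul
      (hu.sub_const _)).add_const _).ennreal_ofReal
  have hlim : ∀ x, Tendsto (fun j => G j x) atTop
      (𝓝 (ENNReal.ofReal (f' (u x) * (u x - c) + c * f' c))) := by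
    intro x
    have he : Tendsto e atTop (𝓝 0) := tendsto_one_div_add_atTop_nhds_zero_nat
    have hs : Tendsto (fun j => (1 - e j) * u x + e j * c) atTop (𝓝[Ici 0] (u x)) := by
      refine tendsto_nhdsWithin_iff.2 ⟨?_, Eventually.of_forall fun j => ?_⟩
      · simpa using ((tendsto_const_nhds (x := (1 : ℝ)).sub he).mul_const (u x)).add
          (he.mul_const c)
      · exact sub_mul_add_mul_nonneg (hu0 x) hc (he0 j).le (he1 j)
    exact ENNReal.tendsto_ofReal
      ((((hf'c _ (hu0 x)).tendsto.comp hs).mul_const _).add_const _)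
  calc _ = ∫⁻ x, liminf (fun j => G j x) atTop ∂m :=
        lintegral_congr fun x => (hlim x).liminf_eq.symm
    _ ≤ liminf (fun j => ∫⁻ x, G j x ∂m) atTop := lintegral_liminf_le hG
    _ ≤ _ := liminf_le_of_frequently_le' (Frequently.of_forall fun j =>
        lintegral_deriv_mul_sub_le_of_variation hf hf_nonneg hd hf'c hf'0 hu hu0 hfu hc
          (he0 j) (he1 j) (hvar _ (he0 j) (he1 j)))

lemma integrable_deriv_comp_of_lintegral_ne_top (hmono : MonotoneOn f' (Ici 0))
    (hf'c : ContinuousOn f' (Ici 0)) (hf'0 : f' 0 = 0)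
    (hu : Measurable u) (hu0 : ∀ x, 0 ≤ u x) {c : ℝ} (hc : 0 < c)
    (hfin : ∫⁻ x, ENNReal.ofReal (f' (u x) * (u x - c) + c * f' c) ∂m ≠ ⊤) :
    Integrable (fun x => f' (u x)) m ∧ Integrable (fun x => u x * f' (u x)) m := by
  set h : α → ℝ := fun x => f' (u x) * (u x - c) + c * f' c
  have hf'u : Measurable fun x => f' (u x) := hf'c.measurable_comp hu hu0
  have hf'_nonneg : ∀ x, 0 ≤ f' (u x) := fun x => nonneg_of_monotoneOn_Ici hmono hf'0 (hu0 x)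
  have h0 : ∀ x, 0 ≤ h x := fun x => by
    have := neg_mul_le_mul_sub_of_monotoneOn hmono hf'0 (hu0 x) hc.le le_rfl zero_le_one
    simp only [h, sub_zero, one_mul, zero_mul, add_zero] at this ⊢
    linarith
  have hh : Integrable h m :=
    ⟨((hf'u.mul (hu.sub_const c)).add_const _).aestronglyMeasurable,
      (hasFiniteIntegral_iff_ofReal (Eventually.of_forall h0)).2 hfin.lt_top⟩
  -- where `u x ≥ 2 c` we have `f' (u x) * c ≤ h x`, elsewhere `f' (u x) ≤ f' (2 c)`
  have hbound : ∀ x, f' (u x) ≤ f' (2 * c) + h x / c := fun x => by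
    rcases le_total (u x) (2 * c) with hx | hx
    · have := hmono (hu0 x) (by simp only [mem_Ici]; linarith) hx
      have := div_nonneg (h0 x) hc.le
      linarith
    · have hfc := nonneg_of_monotoneOn_Ici hmono hf'0 hc.le
      have : f' (u x) ≤ h x / c := by
        rw [le_div_iff₀ hc]
        simp only [h]; nlinarith [hf'_nonneg x]
      have := nonneg_of_monotoneOn_Ici hmono hf'0 (by linarith : (0 : ℝ) ≤ 2 * c)
      linarith
  have hint : Integrable (fun x => f' (u x)) m :=
    ((integrable_const _).add (hh.div_const c)).mono' hf'u.aestronglyMeasurable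
      (Eventually.of_forall fun x => by
        rw [Real.norm_of_nonneg (hf'_nonneg x)]; exact hbound x)
  refine ⟨hint, ((hh.sub (integrable_const (c * f' c))).add (hint.const_mul c)).congr ?_⟩
  exact Eventually.of_forall fun x => by simp only [h, Pi.add_apply, Pi.sub_apply]; ring

end FirstVariation

section BoundedDomain

variable {n : ℕ} {Ω : Set (Rn n)}

lemma IsBoundedDomain.measurableSet (hΩ : IsBoundedDomain Ω) : MeasurableSet Ω := by
  obtain ⟨U, -, -, -, -, rfl, -⟩ := hΩ
  exact isClosed_closure.measurableSet

lemma IsBoundedDomain.isBounded (hΩ : IsBoundedDomain Ω) : Bornology.IsBounded Ω := by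
  obtain ⟨U, -, -, -, hU, rfl, -⟩ := hΩ
  exact hU.closure

lemma IsBoundedDomain.volume_ne_zero (hΩ : IsBoundedDomain Ω) : volume Ω ≠ 0 := by
  obtain ⟨U, hUo, hUne, -, -, rfl, -⟩ := hΩ
  exact ((hUo.measure_pos volume hUne).trans_le (measure_mono subset_closure)).ne'

end BoundedDomain

section DensOn

variable {n : ℕ} {Ω : Set (Rn n)}

lemma densOn_compl (hΩ : MeasurableSet Ω) (w : Rn n → ℝ) : densOn Ω w Ωᶜ = 0 := by
  rw [densOn, withDensity_apply _ hΩ.compl, Measure.restrict_restrict hΩ.compl,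
    compl_inter_self, Measure.restrict_empty, lintegral_zero_measure]

lemma Ffun_densOn (hΩ : MeasurableSet Ω) (f : ℝ → ℝ) {w : Rn n → ℝ} (hw : Measurable w)
    (hw0 : ∀ x, 0 ≤ w x) : Ffun f Ω (densOn Ω w) = ∫⁻ x in Ω, ENNReal.ofReal (f (w x)) := by
  have hdens : densOn Ω w = volume.withDensity (Ω.indicator fun x => ENNReal.ofReal (w x)) :=
    (withDensity_indicator hΩ _).symm
  have hrn : (densOn Ω w).rnDeriv volume =ᵐ[volume] Ω.indicator fun x => ENNReal.ofReal (w x) :=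
    hdens ▸ Measure.rnDeriv_withDensity volume (hw.ennreal_ofReal.indicator hΩ)
  rw [Ffun, if_pos (hdens ▸ withDensity_absolutelyContinuous _ _)]
  refine lintegral_congr_ae ?_
  filter_upwards [ae_restrict_of_ae hrn, ae_restrict_mem hΩ] with x hx hxΩ
  rw [hx, indicator_of_mem hxΩ, ENNReal.toReal_ofReal (hw0 x)]

lemma densOn_convexComb {w v : Rn n → ℝ} (hw : Measurable w) (hv : Measurable v)
    (hw0 : ∀ x, 0 ≤ w x) (hv0 : ∀ x, 0 ≤ v x) {ε : ℝ} (hε0 : 0 ≤ ε) (hε1 : ε ≤ 1) :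
    densOn Ω (fun x => (1 - ε) * w x + ε * v x)
      = ENNReal.ofReal (1 - ε) • densOn Ω w + ENNReal.ofReal ε • densOn Ω v := by
  have hdens : (fun x => ENNReal.ofReal ((1 - ε) * w x + ε * v x))
      = ENNReal.ofReal (1 - ε) • (fun x => ENNReal.ofReal (w x))
        + ENNReal.ofReal ε • fun x => ENNReal.ofReal (v x) := by
    funext x
    simp only [Pi.add_apply, Pi.smul_apply, smul_eq_mul]
    rw [ENNReal.ofReal_add (mul_nonneg (by linarith) (hw0 x)) (mul_nonneg hε0 (hv0 x)),
      ENNReal.ofReal_mul (by linarith), ENNReal.ofReal_mul hε0]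
  rw [densOn, hdens, withDensity_add_right _ (hv.ennreal_ofReal.const_smul _),
    withDensity_smul _ hw.ennreal_ofReal, withDensity_smul _ hv.ennreal_ofReal]
  rfl

lemma probOn_densOn_inv_volume (hΩ : MeasurableSet Ω) (h0 : volume Ω ≠ 0)
    (htop : volume Ω ≠ ⊤) :
    ProbOn Ω (densOn Ω fun _ => (volume Ω).toReal⁻¹) := by
  refine ⟨⟨?_⟩, densOn_compl hΩ _⟩
  rw [densOn, withDensity_const, Measure.smul_apply, Measure.restrict_apply_univ, smul_eq_mul,
    ENNReal.ofReal_inv_of_pos (ENNReal.toReal_pos h0 htop), ENNReal.ofReal_toReal htop,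
    ENNReal.inv_mul_cancel h0 htop]

lemma ProbOn.convexComb {μ ρ : Measure (Rn n)} (hμ : ProbOn Ω μ) (hρ : ProbOn Ω ρ) {ε : ℝ}
    (hε0 : 0 ≤ ε) (hε1 : ε ≤ 1) :
    ProbOn Ω (ENNReal.ofReal (1 - ε) • μ + ENNReal.ofReal ε • ρ) := by
  obtain ⟨⟨hμ1⟩, hμΩ⟩ := hμ
  obtain ⟨⟨hρ1⟩, hρΩ⟩ := hρ
  refine ⟨⟨?_⟩, ?_⟩
  · simp only [Measure.add_apply, Measure.smul_apply, smul_eq_mul, hμ1, hρ1, mul_one]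
    rw [← ENNReal.ofReal_add (by linarith) hε0]
    simp
  · simp [hμΩ, hρΩ]

end DensOn

section Transport

variable {n : ℕ} {Ω : Set (Rn n)} {p : ℝ} {μ ρ ν : Measure (Rn n)}

lemma prod_mem_couplings [IsProbabilityMeasure ρ] [IsProbabilityMeasure ν] :
    ρ.prod ν ∈ Couplings ρ ν :=
  ⟨inferInstance, Measure.map_fst_prod.trans (by simp), Measure.map_snd_prod.trans (by simp)⟩

lemma add_smul_mem_couplings {a b : ℝ≥0∞} (hab : a + b = 1) {γ γ' : Measure (Rn n × Rn n)}
    (hγ : γ ∈ Couplings μ ν) (hγ' : γ' ∈ Couplings ρ ν) :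
    a • γ + b • γ' ∈ Couplings (a • μ + b • ρ) ν := by
  obtain ⟨⟨hγ1⟩, hγμ, hγν⟩ := hγ
  obtain ⟨⟨hγ'1⟩, hγ'ρ, hγ'ν⟩ := hγ'
  refine ⟨⟨?_⟩, ?_, ?_⟩
  · simp [hγ1, hγ'1, hab]
  · rw [Measure.map_add _ _ measurable_fst, Measure.map_smul, Measure.map_smul, hγμ, hγ'ρ]
  · rw [Measure.map_add _ _ measurable_snd, Measure.map_smul, Measure.map_smul, hγν, hγ'ν,
      ← add_smul, hab, one_smul]

lemma Tcost_add_smul_le {a b : ℝ≥0∞} (hab : a + b = 1) :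
    Tcost p (a • μ + b • ρ) ν ≤ a * Tcost p μ ν + b * Tcost p ρ ν := by
  rcases eq_or_ne a 0 with rfl | ha
  · rw [zero_add] at hab; simp [hab]
  rcases eq_or_ne b 0 with rfl | hb
  · rw [add_zero] at hab; simp [hab]
  have ha' : a ≠ ⊤ := ne_top_of_le_ne_top ENNReal.one_ne_top (hab ▸ le_self_add)
  have hb' : b ≠ ⊤ := ne_top_of_le_ne_top ENNReal.one_ne_top (hab ▸ le_add_self)
  simp only [Tcost, ENNReal.mul_iInf_of_ne ha ha', ENNReal.mul_iInf_of_ne hb hb',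
    ENNReal.iInf_add, ENNReal.add_iInf]
  refine le_iInf₂ fun γ' hγ' => le_iInf₂ fun γ hγ => ?_
  refine (iInf₂_le _ (add_smul_mem_couplings hab hγ hγ')).trans_eq ?_
  rw [lintegral_add_measure, lintegral_smul_measure, lintegral_smul_measure]
  rfl

lemma Tcost_le_diam_rpow (hΩ : Bornology.IsBounded Ω) (hp : 0 ≤ p) (hρ : ProbOn Ω ρ)
    (hν : ProbOn Ω ν) : Tcost p ρ ν ≤ ENNReal.ofReal (diam Ω ^ p) := by
  have := hρ.1; have := hν.1
  have hΩΩ : ∀ᵐ z ∂ρ.prod ν, z ∈ Ω ×ˢ Ω := by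
    have h1 : ρ.prod ν (Ωᶜ ×ˢ univ) = 0 := by rw [Measure.prod_prod, hρ.2, zero_mul]
    have h2 : ρ.prod ν (univ ×ˢ Ωᶜ) = 0 := by rw [Measure.prod_prod, hν.2, mul_zero]
    refine measure_mono_null (fun z hz => ?_) (measure_union_null h1 h2)
    simp only [mem_prod] at hz
    simp only [mem_union, mem_prod, mem_compl_iff, mem_univ, and_true, true_and]
    tauto
  calc Tcost p ρ ν ≤ ∫⁻ z, ENNReal.ofReal (‖z.1 - z.2‖ ^ p) ∂ρ.prod ν :=
        iInf₂_le _ prod_mem_couplings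
    _ ≤ ∫⁻ _, ENNReal.ofReal (diam Ω ^ p) ∂ρ.prod ν := lintegral_mono_ae <| hΩΩ.mono fun z hz =>
        ENNReal.ofReal_le_ofReal <| Real.rpow_le_rpow (norm_nonneg _)
          (dist_eq_norm z.1 z.2 ▸ dist_le_diam_of_mem hΩ hz.1 hz.2) hp
    _ = ENNReal.ofReal (diam Ω ^ p) := by simp

end Transport

lemma Ffun_le_Ffun_convexComb_add {n : ℕ} {Ω : Set (Rn n)} {p : ℝ} {f : ℝ → ℝ}
    {μ ρ ν : Measure (Rn n)} (hΩ : Bornology.IsBounded Ω) (hp : 0 ≤ p) (hν : ProbOn Ω ν)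
    (hμ : ProbOn Ω μ) (hρ : ProbOn Ω ρ)
    (hmin : ∀ μ' : Measure (Rn n), ProbOn Ω μ' → FFnu p f Ω ν μ ≤ FFnu p f Ω ν μ')
    (hT : Tcost p μ ν ≠ ⊤) {ε : ℝ} (hε0 : 0 ≤ ε) (hε1 : ε ≤ 1) :
    Ffun f Ω μ ≤ Ffun f Ω (ENNReal.ofReal (1 - ε) • μ + ENNReal.ofReal ε • ρ)
      + ENNReal.ofReal ε * ENNReal.ofReal (diam Ω ^ p) := by
  set με := ENNReal.ofReal (1 - ε) • μ + ENNReal.ofReal ε • ρ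
  have hab : ENNReal.ofReal (1 - ε) + ENNReal.ofReal ε = 1 := by
    rw [← ENNReal.ofReal_add (by linarith) hε0]; simp
  have hTε : Tcost p με ν ≤ Tcost p μ ν + ENNReal.ofReal ε * ENNReal.ofReal (diam Ω ^ p) :=
    calc Tcost p με ν
        ≤ ENNReal.ofReal (1 - ε) * Tcost p μ ν + ENNReal.ofReal ε * Tcost p ρ ν :=
          Tcost_add_smul_le hab
      _ ≤ 1 * Tcost p μ ν + ENNReal.ofReal ε * ENNReal.ofReal (diam Ω ^ p) := by
          gcongr
          · exact ENNReal.ofReal_le_one.2 (by linarith)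
          · exact Tcost_le_diam_rpow hΩ hp hρ hν
      _ = _ := by rw [one_mul]
  refine ENNReal.le_of_add_le_add_left hT ?_
  calc Tcost p μ ν + Ffun f Ω μ ≤ Tcost p με ν + Ffun f Ω με := hmin _ (hμ.convexComb hρ hε0 hε1)
    _ ≤ _ := by
      rw [← add_assoc, add_right_comm]
      exact add_le_add_left hTε _

theorem statement_19_general {n : ℕ} (Ω : Set (Rn n)) (hΩ : IsBoundedDomain Ω)
    (p : ℝ) (hp : 1 ≤ p) (f f' : ℝ → ℝ)
    (hf_nonneg : ∀ t : ℝ, 0 ≤ t → 0 ≤ f t)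
    (hf_sconv : StrictConvexOn ℝ (Ici 0) f)
    (hf_deriv : ∀ t ∈ Ici (0:ℝ), HasDerivWithinAt f (f' t) (Ici 0) t)
    (hf'_cont : ContinuousOn f' (Ici 0)) (hf'0 : f' 0 = 0)
    (ν : Measure (Rn n)) (hνP : ProbOn Ω ν)
    (u : Rn n → ℝ) (hu_meas : Measurable u) (hu_nonneg : ∀ x, 0 ≤ u x)
    (μ : Measure (Rn n)) (hμ : μ = densOn Ω u) (hμP : ProbOn Ω μ)
    (hmin : ∀ μ' : Measure (Rn n), ProbOn Ω μ' → FFnu p f Ω ν μ ≤ FFnu p f Ω ν μ')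
    (hfin : FFnu p f Ω ν μ < ⊤) :
    IntegrableOn (fun x => f' (u x)) Ω volume ∧
    IntegrableOn (fun x => u x * f' (u x)) Ω volume := by
  subst hμ
  have hΩm := hΩ.measurableSet
  have hvol : volume Ω ≠ ⊤ := hΩ.isBounded.measure_lt_top.ne
  have := isFiniteMeasure_restrict.2 hvol
  have hc : 0 < (volume Ω).toReal⁻¹ := inv_pos.2 (ENNReal.toReal_pos hΩ.volume_ne_zero hvol)
  obtain ⟨hT, hF⟩ := ENNReal.add_lt_top.1 hfin
  rw [Ffun_densOn hΩm f hu_meas hu_nonneg] at hF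
  have hvar : ∀ ε : ℝ, 0 < ε → ε ≤ 1 → ∫⁻ x in Ω, ENNReal.ofReal (f (u x))
      ≤ (∫⁻ x in Ω, ENNReal.ofReal (f ((1 - ε) * u x + ε * (volume Ω).toReal⁻¹)))
        + ENNReal.ofReal ε * ENNReal.ofReal (diam Ω ^ p) := by
    intro ε hε0 hε1
    have := Ffun_le_Ffun_convexComb_add hΩ.isBounded (by linarith) hνP hμP
      (probOn_densOn_inv_volume hΩm hΩ.volume_ne_zero hvol) hmin hT.ne hε0.le hε1
    rwa [← densOn_convexComb hu_meas measurable_const hu_nonneg (fun _ => hc.le) hε0.le hε1,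
      Ffun_densOn hΩm f hu_meas hu_nonneg,
      Ffun_densOn hΩm f (by fun_prop)
        fun x => sub_mul_add_mul_nonneg (hu_nonneg x) hc.le hε0.le hε1] at this
  have hconv := hf_sconv.convexOn
  exact integrable_deriv_comp_of_lintegral_ne_top
    (hconv.monotoneOn_of_hasDerivWithinAt hf_deriv) hf'_cont hf'0 hu_meas hu_nonneg hc
    (ne_top_of_le_ne_top (by finiteness) (lintegral_deriv_mul_sub_le hconv hf_nonneg hf_deriv
      hf'_cont hf'0 hu_meas hu_nonneg hF.ne hc.le hvar))

/-- for a minimizer `μ = u·ℒⁿ` of `𝔉^p_ν`, both `f'(u)` and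
`u f'(u)` are in `L¹(Ω)`. -/
theorem statement_19 {n : ℕ} (Ω : Set (Rn n)) (hΩ : IsBoundedDomain Ω)
    (p : ℝ) (hp : 1 ≤ p) (f f' : ℝ → ℝ)
    (hf_nonneg : ∀ t : ℝ, 0 ≤ t → 0 ≤ f t) (hf0 : f 0 = 0)
    (hf_sconv : StrictConvexOn ℝ (Ici 0) f)
    (hf_deriv : ∀ t ∈ Ici (0:ℝ), HasDerivWithinAt f (f' t) (Ici 0) t)
    (hf'_cont : ContinuousOn f' (Ici 0)) (hf'0 : f' 0 = 0)
    (hf_super : Tendsto (fun t => f t / t) atTop atTop)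
    (ν : Measure (Rn n)) (hνP : ProbOn Ω ν)
    (u : Rn n → ℝ) (hu_meas : Measurable u) (hu_nonneg : ∀ x, 0 ≤ u x)
    (μ : Measure (Rn n)) (hμ : μ = densOn Ω u) (hμP : ProbOn Ω μ)
    (hmin : ∀ μ' : Measure (Rn n), ProbOn Ω μ' → FFnu p f Ω ν μ ≤ FFnu p f Ω ν μ')
    (hfin : FFnu p f Ω ν μ < ⊤) :
    IntegrableOn (fun x => f' (u x)) Ω volume ∧
    IntegrableOn (fun x => u x * f' (u x)) Ω volume :=
  statement_19_general Ω hΩ p hp f f' hf_nonneg hf_sconv hf_deriv hf'_cont hf'0 ν hνP u hu_meas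
    hu_nonneg μ hμ hμP hmin hfin
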